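/- Let (r_u)_{u∈ℤ} be the autocovariance sequence of a stationary scalar time series with spectral density s(ν) = Σ_{u∈ℤ} r_u e^{−2πiuν}, and suppose Σ_{u∈ℤ}(1+|u|)^γ |r_u| < ∞ with γ ≥ 1. Let ξ(ν) = (1/√N) Σ_{n=1}^N y_n e^{−2πi(n−1)ν} where (y_n) has autocovariances r_u. Then for ν₁, ν₂ ∈ [0,1] with ν₂ − ν₁ = k/N, k ∈ {0,…,N−1}: |E[ξ(ν₁) ξ(ν₂)*] − s(ν₁)·1_{ν₁=ν₂}| ≤ C/N, where C depends only on Σ_u |u| |r_u| and Σ_u |r_u|. -/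

import Mathlib

open MeasureTheory Finset Complex
open scoped Real ComplexConjugate

/-! Expanding the product and using stationarity, `E[ξ(ν₁) conj ξ(ν₂)] = N⁻¹ Σ_{m,n<N} f(m-n) aⁿ`
with `f u = r_u e^{-2πiuν₁}` and `a = e^{2πi(ν₂-ν₁)}`, an `N`-th root of unity. Grouping by the lag
`u = m - n`, the coefficient of `f u` is the sum of `aⁿ` over the `N - |u|` indices `n` with
`n + u ∈ [0, N)`, which differs from the full sum `Σ_{n<N} aⁿ = N · 1_{ν₁=ν₂}` by at most `|u|`.
So the error is at most `N⁻¹ Σ_u |u| |r_u|`. -/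

theorem integral_sum_mul_conj_sum {Ω ι : Type*} [MeasurableSpace Ω] {P : Measure Ω}
    (s : Finset ι) {X : ι → Ω → ℂ}
    (hX : ∀ i, MemLp (X i) 2 P) (c d : ι → ℂ) :
    ∫ ω, (∑ i ∈ s, X i ω * c i) * conj (∑ j ∈ s, X j ω * d j) ∂P =
      ∑ i ∈ s, ∑ j ∈ s, c i * conj (d j) * ∫ ω, X i ω * conj (X j ω) ∂P := by
  have hint : ∀ i j, Integrable (fun ω => c i * conj (d j) * (X i ω * conj (X j ω))) P :=
    fun i j => ((hX i).integrable_mul (hX j).star).const_mul _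
  have hexpand : ∀ ω, (∑ i ∈ s, X i ω * c i) * conj (∑ j ∈ s, X j ω * d j) =
      ∑ i ∈ s, ∑ j ∈ s, c i * conj (d j) * (X i ω * conj (X j ω)) := fun ω => by
    rw [map_sum, sum_mul_sum]
    refine sum_congr rfl fun i _ => sum_congr rfl fun j _ => ?_
    rw [map_mul]
    ring
  simp_rw [hexpand]
  rw [integral_finsetSum _ fun i _ => integrable_finsetSum _ fun j _ => hint i j]
  refine sum_congr rfl fun i _ => ?_
  rw [integral_finsetSum _ fun j _ => hint i j]
  exact sum_congr rfl fun j _ => integral_const_mul _ _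

def lagWindow (N : ℕ) (u : ℤ) : Finset ℕ :=
  (range N).filter fun n => 0 ≤ (n : ℤ) + u ∧ (n : ℤ) + u < N

namespace lagWindow

variable {N : ℕ} {u : ℤ}

theorem subset_range : lagWindow N u ⊆ range N := filter_subset _ _

theorem eq_empty_of_notMem_Ioo (hu : u ∉ Ioo (-(N : ℤ)) N) : lagWindow N u = ∅ := by
  simp only [mem_Ioo, not_and_or, not_lt] at hu
  ext n
  simp only [lagWindow, mem_filter, mem_range, notMem_empty, iff_false]
  omega

theorem card_range_sdiff_le : #(range N \ lagWindow N u) ≤ u.natAbs := by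
  have hsub : range N \ lagWindow N u ⊆ Ico (N - u.toNat) N ∪ range (-u).toNat := by
    intro n
    simp only [lagWindow, mem_sdiff, mem_filter, mem_range, mem_union, mem_Ico]
    omega
  calc #(range N \ lagWindow N u) ≤ #(Ico (N - u.toNat) N ∪ range (-u).toNat) :=
        card_le_card hsub
    _ ≤ #(Ico (N - u.toNat) N) + #(range (-u).toNat) := card_union_le _ _
    _ ≤ u.natAbs := by simp only [Nat.card_Ico, card_range]; omega

theorem norm_sum_sub_sum_range_le {E : Type*} [SeminormedAddCommGroup E] {a : ℕ → E}
    (ha : ∀ n, ‖a n‖ ≤ 1) :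
    ‖∑ n ∈ lagWindow N u, a n - ∑ n ∈ range N, a n‖ ≤ u.natAbs := by
  rw [← sum_sdiff (subset_range (N := N) (u := u)), sub_add_cancel_right, norm_neg]
  calc ‖∑ n ∈ range N \ lagWindow N u, a n‖ ≤ ∑ n ∈ range N \ lagWindow N u, ‖a n‖ :=
        norm_sum_le _ _
    _ ≤ #(range N \ lagWindow N u) := by simpa using sum_le_sum fun n _ => ha n
    _ ≤ u.natAbs := by exact_mod_cast card_range_sdiff_le

end lagWindow

theorem sum_range_sum_range_sub_eq_sum_lagWindow {R : Type*} [NonUnitalNonAssocSemiring R]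
    (N : ℕ) (f : ℤ → R) (a : ℕ → R) :
    ∑ m ∈ range N, ∑ n ∈ range N, f (m - n) * a n =
      ∑ u ∈ Ioo (-(N : ℤ)) N, f u * ∑ n ∈ lagWindow N u, a n := by
  rw [← sum_product', ← sum_fiberwise_of_maps_to (g := fun p : ℕ × ℕ => (p.1 : ℤ) - p.2)
    (t := Ioo (-(N : ℤ)) N) fun p hp => by simp only [mem_product, mem_range] at hp; simp; omega]
  refine sum_congr rfl fun u _ => ?_
  rw [mul_sum]
  refine sum_nbij' (fun p => p.2) (fun n => (((n : ℤ) + u).toNat, n)) ?_ ?_ ?_ ?_ ?_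
  · intro p hp
    simp only [lagWindow, mem_filter, mem_product, mem_range] at hp ⊢
    omega
  · intro n hn
    simp only [lagWindow, mem_filter, mem_product, mem_range] at hn ⊢
    omega
  · intro p hp
    simp only [mem_filter, mem_product, mem_range] at hp
    ext <;> simp; omega
  · intro n _
    simp
  · intro p hp
    simp only [mem_filter] at hp
    rw [← hp.2]

theorem norm_sum_range_sum_range_sub_sub_le {R : Type*} [NormedCommRing R] (N : ℕ)
    {f : ℤ → R}
    (hf : Summable f) (hf' : Summable fun u : ℤ => |(u : ℝ)| * ‖f u‖) {a : ℕ → R}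
    (ha : ∀ n, ‖a n‖ ≤ 1) :
    ‖∑ m ∈ range N, ∑ n ∈ range N, f (m - n) * a n - (∑ n ∈ range N, a n) * ∑' u, f u‖ ≤
      ∑' u : ℤ, |(u : ℝ)| * ‖f u‖ := by
  have hvanish : ∀ u ∉ Ioo (-(N : ℤ)) N, f u * ∑ n ∈ lagWindow N u, a n = 0 := fun u hu => by
    rw [lagWindow.eq_empty_of_notMem_Ioo hu, sum_empty, mul_zero]
  rw [sum_range_sum_range_sub_eq_sum_lagWindow, ← tsum_eq_sum (L := .unconditional ℤ) hvanish,
    ← hf.tsum_mul_left, ← (summable_of_ne_finset_zero hvanish).tsum_sub (hf.mul_left _)]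
  refine tsum_of_norm_bounded hf'.hasSum fun u => ?_
  calc ‖f u * ∑ n ∈ lagWindow N u, a n - (∑ n ∈ range N, a n) * f u‖
      = ‖f u * (∑ n ∈ lagWindow N u, a n - ∑ n ∈ range N, a n)‖ := by
        rw [mul_sub, mul_comm (∑ n ∈ range N, a n)]
    _ ≤ ‖f u‖ * u.natAbs := (norm_mul_le _ _).trans <|
        mul_le_mul_of_nonneg_left (lagWindow.norm_sum_sub_sum_range_le ha) (norm_nonneg _)
    _ = |(u : ℝ)| * ‖f u‖ := by rw [Nat.cast_natAbs, Int.cast_abs, mul_comm]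

theorem exp_mul_conj_exp (m n : ℕ) (ν₁ ν₂ : ℝ) :
    exp (-(2 * π * I) * m * ν₁) * conj (exp (-(2 * π * I) * n * ν₂)) =
      exp (-(2 * π * I) * ((m - n : ℤ) : ℂ) * ν₁) * exp (2 * π * I * ((ν₂ - ν₁ : ℝ) : ℂ)) ^ n := by
  rw [← exp_conj, ← exp_nat_mul, ← exp_add, ← exp_add]
  congr 1
  simp only [map_mul, map_neg, conj_ofReal, map_ofNat, conj_I, map_natCast]
  push_cast
  ring

theorem sum_range_exp_two_pi_I_mul_div_pow {N k : ℕ} (hk : k < N) :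
    ∑ n ∈ range N, exp (2 * π * I * ((k : ℂ) / N)) ^ n = if k = 0 then (N : ℂ) else 0 := by
  have hζ := isPrimitiveRoot_exp N (by omega)
  rw [show 2 * π * I * ((k : ℂ) / N) = k * (2 * π * I / N) by ring, exp_nat_mul]
  split_ifs with hk0
  · simp [hk0]
  have hpow : (exp (2 * π * I / N) ^ k) ^ N = 1 := by rw [pow_right_comm, hζ.pow_eq_one, one_pow]
  rw [geom_sum_eq (hζ.pow_ne_one_of_pos_of_lt hk0 hk), hpow, sub_self, zero_div]

theorem sum_range_exp_two_pi_I_mul_sub_pow {N k : ℕ} (hk : k < N) {ν₁ ν₂ : ℝ}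
    (hν : ν₂ - ν₁ = k / N) :
    ∑ n ∈ range N, exp (2 * π * I * ((ν₂ - ν₁ : ℝ) : ℂ)) ^ n = if ν₁ = ν₂ then (N : ℂ) else 0 := by
  have hk0 : k = 0 ↔ ν₁ = ν₂ := by
    rw [show ν₁ = ν₂ ↔ ν₂ - ν₁ = 0 by rw [sub_eq_zero, eq_comm], hν, div_eq_zero_iff,
      Nat.cast_eq_zero, Nat.cast_eq_zero]
    omega
  simp only [hν, ← hk0]
  push_cast
  exact sum_range_exp_two_pi_I_mul_div_pow hk

/-- The paper's `ξ(ν)`, with `x n` standing for `y_{n+1}`. -/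
noncomputable def dft (N : ℕ) (x : ℕ → ℂ) (ν : ℝ) : ℂ :=
  (Real.sqrt N : ℂ)⁻¹ * ∑ n ∈ range N, x n * exp (-(2 * π * I) * n * ν)

theorem integral_dft_mul_conj_dft {Ω : Type*} [MeasurableSpace Ω] {P : Measure Ω}
    {X : ℕ → Ω → ℂ} (hX : ∀ n, MemLp (X n) 2 P) {r : ℤ → ℂ}
    (hr : ∀ m n : ℕ, ∫ ω, X m ω * conj (X n ω) ∂P = r (m - n)) (N : ℕ) (ν₁ ν₂ : ℝ) :
    ∫ ω, dft N (X · ω) ν₁ * conj (dft N (X · ω) ν₂) ∂P =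
      (N : ℂ)⁻¹ * ∑ m ∈ range N, ∑ n ∈ range N,
        r (m - n) * exp (-(2 * π * I) * ((m - n : ℤ) : ℂ) * ν₁) *
          exp (2 * π * I * ((ν₂ - ν₁ : ℝ) : ℂ)) ^ n := by
  have hscale : ∀ A B : ℂ, ((Real.sqrt N : ℂ)⁻¹ * A) * conj ((Real.sqrt N : ℂ)⁻¹ * B) =
      (N : ℂ)⁻¹ * (A * conj B) := fun A B => by
    rw [map_mul, map_inv₀, conj_ofReal, mul_mul_mul_comm, ← mul_inv, ← ofReal_mul,
      Real.mul_self_sqrt N.cast_nonneg, ofReal_natCast]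
  simp only [dft, hscale]
  rw [integral_const_mul, integral_sum_mul_conj_sum _ hX]
  congr 1
  refine sum_congr rfl fun m _ => sum_congr rfl fun n _ => ?_
  rw [hr, exp_mul_conj_exp]
  ring

section Weights

variable {E : Type*} [NormedAddCommGroup E] {r : ℤ → E}

theorem summable_one_add_abs_mul_norm_of_rpow {γ : ℝ} (hγ : 1 ≤ γ)
    (h : Summable fun u : ℤ => (1 + |(u : ℝ)|) ^ γ * ‖r u‖) :
    Summable fun u : ℤ => (1 + |(u : ℝ)|) * ‖r u‖ := by
  refine h.of_nonneg_of_le (fun u => by positivity) fun u => ?_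
  gcongr
  exact Real.self_le_rpow_of_one_le (le_add_of_nonneg_right (abs_nonneg _)) hγ

theorem summable_norm_of_one_add_abs_mul
    (h : Summable fun u : ℤ => (1 + |(u : ℝ)|) * ‖r u‖) : Summable fun u => ‖r u‖ :=
  h.of_nonneg_of_le (fun _ => norm_nonneg _) fun _ =>
    le_mul_of_one_le_left (norm_nonneg _) (le_add_of_nonneg_right (abs_nonneg _))

theorem summable_abs_mul_norm_of_one_add_abs_mul
    (h : Summable fun u : ℤ => (1 + |(u : ℝ)|) * ‖r u‖) :
    Summable fun u : ℤ => |(u : ℝ)| * ‖r u‖ :=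
  h.of_nonneg_of_le (fun _ => by positivity) fun _ => by gcongr; linarith

theorem tsum_abs_mul_norm_le_tsum_one_add_abs_mul
    (h : Summable fun u : ℤ => (1 + |(u : ℝ)|) * ‖r u‖) :
    ∑' u : ℤ, |(u : ℝ)| * ‖r u‖ ≤ ∑' u : ℤ, (1 + |(u : ℝ)|) * ‖r u‖ :=
  (summable_abs_mul_norm_of_one_add_abs_mul h).tsum_le_tsum (fun _ => by gcongr; linarith) h

end Weights

/-- For a stationary scalar time series with autocovariances `r_u`
satisfying `Σ_u (1+|u|)^γ |r_u| < ∞` (γ ≥ 1) and spectral density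
`s(ν) = Σ_u r_u e^{−2πiuν}`, for frequencies ν₁, ν₂ ∈ [0,1] with ν₂ − ν₁ = k/N
(k ∈ {0,…,N−1}),
`|E[ξ(ν₁) ξ(ν₂)*] − s(ν₁) 1_{ν₁=ν₂}| ≤ C/N`, where `C` depends only on
`Σ_u |u||r_u|` and `Σ_u |r_u|` (here bounded through `Σ_u (1+|u|)|r_u| ≤ R`). -/
theorem dft_covariance_approximation (R : ℝ) :
    ∃ C : ℝ, ∀ (r : ℤ → ℂ) (γ : ℝ), 1 ≤ γ →
      Summable (fun u : ℤ => (1 + |(u : ℝ)|) ^ γ * ‖r u‖) →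
      (∑' u : ℤ, (1 + |(u : ℝ)|) * ‖r u‖) ≤ R →
      ∀ (N : ℕ), 0 < N →
      ∀ (Ω : Type) (_ : MeasurableSpace Ω) (P : Measure Ω),
        IsProbabilityMeasure P →
        ∀ y : ℤ → Ω → ℂ,
          (∀ n : ℤ, MemLp (y n) 2 P) →
          (∀ n u : ℤ, ∫ ω, y (n + u) ω * (starRingEnd ℂ) (y n ω) ∂P = r u) →
          ∀ (ν₁ ν₂ : ℝ) (k : ℕ), k < N →
            ν₁ ∈ Set.Icc (0 : ℝ) 1 → ν₂ ∈ Set.Icc (0 : ℝ) 1 →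
            ν₂ - ν₁ = (k : ℝ) / N →
            ‖(∫ ω,
                  ((Real.sqrt N : ℂ)⁻¹ * ∑ n ∈ Finset.range N,
                      y (n + 1) ω * Complex.exp (-(2 * Real.pi * Complex.I) * n * ν₁)) *
                    (starRingEnd ℂ)
                      ((Real.sqrt N : ℂ)⁻¹ * ∑ n ∈ Finset.range N,
                          y (n + 1) ω * Complex.exp (-(2 * Real.pi * Complex.I) * n * ν₂))
                  ∂P)
                - (if ν₁ = ν₂ then
                    ∑' u : ℤ, r u * Complex.exp (-(2 * Real.pi * Complex.I) * u * ν₁)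
                  else 0)‖
              ≤ C / N := by
  refine ⟨R, fun r γ hγ hsum hR N hN Ω _ P _ y hy hcov ν₁ ν₂ k hk _ _ hdiff => ?_⟩
  set f : ℤ → ℂ := fun u => r u * exp (-(2 * π * I) * u * ν₁)
  set a : ℂ := exp (2 * π * I * ((ν₂ - ν₁ : ℝ) : ℂ))
  have hnorm_f : ∀ u, ‖f u‖ = ‖r u‖ := fun u => by simp [f, Complex.norm_exp]
  have hweight := summable_one_add_abs_mul_norm_of_rpow hγ hsum
  have hf : Summable f :=
    .of_norm (by simpa only [hnorm_f] using summable_norm_of_one_add_abs_mul hweight)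
  have hf_abs : Summable fun u : ℤ => |(u : ℝ)| * ‖f u‖ := by
    simpa only [hnorm_f] using summable_abs_mul_norm_of_one_add_abs_mul hweight
  have hspec : (if ν₁ = ν₂ then ∑' u, f u else 0) =
      (N : ℂ)⁻¹ * ((∑ n ∈ range N, a ^ n) * ∑' u, f u) := by
    rw [sum_range_exp_two_pi_I_mul_sub_pow hk hdiff]
    split_ifs
    · rw [← mul_assoc, inv_mul_cancel₀ (by exact_mod_cast hN.ne'), one_mul]
    · simp
  have hcov' : ∀ m n : ℕ, ∫ ω, y (m + 1) ω * conj (y (n + 1) ω) ∂P = r (m - n) := fun m n => by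
    rw [← hcov (n + 1) (m - n)]
    ring_nf
  change ‖∫ ω, dft N (fun n => y (n + 1) ω) ν₁ * conj (dft N (fun n => y (n + 1) ω) ν₂) ∂P - _‖ ≤ _
  rw [integral_dft_mul_conj_dft (fun n => hy _) hcov', hspec, ← mul_sub, norm_mul, norm_inv,
    Complex.norm_natCast, div_eq_inv_mul]
  gcongr
  calc _ ≤ ∑' u : ℤ, |(u : ℝ)| * ‖f u‖ :=
        norm_sum_range_sum_range_sub_sub_le N hf hf_abs fun n => by simp [Complex.norm_exp]
    _ ≤ R := by
        simpa only [hnorm_f] using (tsum_abs_mul_norm_le_tsum_one_add_abs_mul hweight).trans hR
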